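/- Under the Kantorovich hypotheses, any Newton sequence (u^(k)) for F starting at u* whose iterates all lie in the closed ball of radius r⁻ around u* converges in X to a limit u belonging to that closed ball which satisfies F(u) = 0; in particular F has a zero in the closed ball of radius r⁻ around u*. -/

import Mathlib

open Metric Filter Topology Set

/-!
Compare the Newton iterates with Newton's method for the scalar majorant
`h(t) = (βK/2) t² - t + α`, started at `t₀ = 0`. The first step has length exactly `α`; afterwards
the quadratic Taylor bound `‖F(u_{k+1})‖ ≤ (K/2) ‖u_{k+1} - u_k‖²` and the Banach perturbation
bound for `F'(u_{k+1})` around `F'(u*) = Γ` give by induction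
`‖u_{k+1} - u_k‖ ≤ t_{k+1} - t_k` and `‖u_k - u*‖ ≤ t_k`. The condition `2βKα ≤ 1` keeps
`1 - βK t_k` positive, so `(t_k)` is increasing and bounded; hence `(u_k)` is Cauchy, and its
limit is a zero of `F` because the residuals are quadratic in the increments.
-/

noncomputable def kantorovichPoly (c α t : ℝ) : ℝ := c / 2 * t ^ 2 - t + α

/-- Newton's iteration for `t ↦ kantorovichPoly c α t`, whose derivative is `c t - 1`,
started at `0`. -/
noncomputable def kantorovichSeq (c α : ℝ) : ℕ → ℝ
  | 0 => 0
  | k + 1 => kantorovichSeq c α k +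
      kantorovichPoly c α (kantorovichSeq c α k) / (1 - c * kantorovichSeq c α k)

section Majorant

variable {c α : ℝ}

@[simp]
lemma kantorovichSeq_zero : kantorovichSeq c α 0 = 0 := rfl

@[simp]
lemma kantorovichSeq_one : kantorovichSeq c α 1 = α := by
  simp [kantorovichSeq, kantorovichPoly]

lemma kantorovichSeq_succ_sub_mul {k : ℕ} (hk : 1 - c * kantorovichSeq c α k ≠ 0) :
    (kantorovichSeq c α (k + 1) - kantorovichSeq c α k) * (1 - c * kantorovichSeq c α k) =
      kantorovichPoly c α (kantorovichSeq c α k) := by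
  rw [kantorovichSeq, add_sub_cancel_left, div_mul_cancel₀ _ hk]

lemma kantorovichPoly_kantorovichSeq_succ {k : ℕ} (hk : 1 - c * kantorovichSeq c α k ≠ 0) :
    kantorovichPoly c α (kantorovichSeq c α (k + 1)) =
      c / 2 * (kantorovichSeq c α (k + 1) - kantorovichSeq c α k) ^ 2 := by
  have h := kantorovichSeq_succ_sub_mul hk
  unfold kantorovichPoly at h ⊢
  linear_combination -h

/-- In terms of `d = 1 - c t`, the majorant iteration is Heron's iteration
`d ↦ (d² + (1 - 2cα)) / 2d`, which stays positive as long as `2cα ≤ 1`. -/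
lemma one_sub_mul_kantorovichSeq_pos (hsmall : 2 * c * α ≤ 1) (k : ℕ) :
    0 < 1 - c * kantorovichSeq c α k := by
  induction k with
  | zero => simp
  | succ k ih =>
    have h := kantorovichSeq_succ_sub_mul (α := α) ih.ne'
    have heron : (1 - c * kantorovichSeq c α (k + 1)) * (2 * (1 - c * kantorovichSeq c α k)) =
        (1 - c * kantorovichSeq c α k) ^ 2 + (1 - 2 * c * α) := by
      unfold kantorovichPoly at h
      linear_combination (-2 * c) * h
    have hsq : 0 < (1 - c * kantorovichSeq c α k) ^ 2 + (1 - 2 * c * α) :=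
      add_pos_of_pos_of_nonneg (pow_pos ih 2) (by linarith)
    exact pos_of_mul_pos_left (heron ▸ hsq) (by positivity)

variable (hc : 0 ≤ c) (hα : 0 ≤ α) (hsmall : 2 * c * α ≤ 1)
include hc hα hsmall

lemma kantorovichPoly_kantorovichSeq_nonneg (k : ℕ) :
    0 ≤ kantorovichPoly c α (kantorovichSeq c α k) := by
  cases k with
  | zero => simpa [kantorovichPoly] using hα
  | succ k =>
    rw [kantorovichPoly_kantorovichSeq_succ (one_sub_mul_kantorovichSeq_pos hsmall k).ne']
    positivity

lemma kantorovichSeq_monotone : Monotone (kantorovichSeq c α) :=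
  monotone_nat_of_le_succ fun k => le_add_of_nonneg_right <|
    div_nonneg (kantorovichPoly_kantorovichSeq_nonneg hc hα hsmall k)
      (one_sub_mul_kantorovichSeq_pos hsmall k).le

lemma kantorovichSeq_le_two_mul (k : ℕ) : kantorovichSeq c α k ≤ 2 * α := by
  have h0 : 0 ≤ kantorovichSeq c α k := kantorovichSeq_monotone hc hα hsmall (Nat.zero_le k)
  have hd := one_sub_mul_kantorovichSeq_pos hsmall k
  have hp := kantorovichPoly_kantorovichSeq_nonneg hc hα hsmall k
  -- `t ≤ α + (c t) t / 2 ≤ α + t / 2`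
  unfold kantorovichPoly at hp
  nlinarith

end Majorant

lemma cauchySeq_of_dist_le_sub_of_monotone {E : Type*} [PseudoMetricSpace E] {x : ℕ → E}
    {t : ℕ → ℝ} {B : ℝ} (ht : Monotone t) (hB : ∀ k, t k ≤ B)
    (hx : ∀ k, dist (x k) (x (k + 1)) ≤ t (k + 1) - t k) : CauchySeq x :=
  cauchySeq_of_dist_le_of_summable _ hx <|
    summable_of_sum_range_le (c := B - t 0) (fun k => sub_nonneg.2 (ht k.le_succ))
      fun n => by rw [Finset.sum_range_sub]; linarith [hB n]

lemma ContinuousLinearEquiv.one_sub_mul_norm_le {𝕜 E F : Type*} [NontriviallyNormedField 𝕜]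
    [NormedAddCommGroup E] [NormedSpace 𝕜 E] [NormedAddCommGroup F] [NormedSpace 𝕜 F]
    (e : E ≃L[𝕜] F) {β : ℝ} (hβ : ‖(e.symm : F →L[𝕜] E)‖ ≤ β) (A : E →L[𝕜] F) (x : E) :
    (1 - β * ‖A - e‖) * ‖x‖ ≤ β * ‖A x‖ := by
  have hx : x = e.symm (A x) - e.symm ((A - e) x) := by simp
  have h : ‖x‖ ≤ β * ‖A x‖ + β * (‖A - e‖ * ‖x‖) := calc
    ‖x‖ = ‖e.symm (A x) - e.symm ((A - e) x)‖ := congrArg norm hx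
    _ ≤ ‖e.symm (A x)‖ + ‖e.symm ((A - e) x)‖ := norm_sub_le _ _
    _ ≤ ‖(e.symm : F →L[𝕜] E)‖ * ‖A x‖ + ‖(e.symm : F →L[𝕜] E)‖ * (‖A - e‖ * ‖x‖) :=
      add_le_add ((e.symm : F →L[𝕜] E).le_opNorm _)
        (((e.symm : F →L[𝕜] E).le_opNorm _).trans
          (mul_le_mul_of_nonneg_left ((A - e).le_opNorm x) (norm_nonneg _)))
    _ ≤ β * ‖A x‖ + β * (‖A - e‖ * ‖x‖) := by gcongr
  linarith

theorem Convex.norm_image_sub_sub_fderiv_le {E F : Type*} [NormedAddCommGroup E]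
    [NormedSpace ℝ E] [NormedAddCommGroup F] [NormedSpace ℝ F] {f : E → F}
    {f' : E → E →L[ℝ] F} {s : Set E} {K : ℝ} (hs : Convex ℝ s)
    (hf : ∀ x ∈ s, HasFDerivWithinAt f (f' x) s x)
    (hLip : ∀ x ∈ s, ∀ y ∈ s, ‖f' x - f' y‖ ≤ K * ‖x - y‖) {a b : E} (ha : a ∈ s) (hb : b ∈ s) :
    ‖f b - f a - f' a (b - a)‖ ≤ K / 2 * ‖b - a‖ ^ 2 := by
  set v := b - a
  have hseg : MapsTo (fun τ : ℝ => a + τ • v) (Icc 0 1) s := fun τ hτ =>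
    hs.add_smul_sub_mem ha hb hτ
  set φ : ℝ → F := fun τ => f (a + τ • v) - f a - τ • f' a v
  have hφ : ∀ τ ∈ Icc (0 : ℝ) 1,
      HasDerivWithinAt φ (f' (a + τ • v) v - f' a v) (Icc 0 1) τ := by
    intro τ hτ
    have hline : HasDerivWithinAt (fun τ : ℝ => a + τ • v) v (Icc 0 1) τ := by
      simpa using ((hasDerivWithinAt_id τ _).smul_const v).const_add a
    have hlin : HasDerivWithinAt (fun τ : ℝ => τ • f' a v) (f' a v) (Icc 0 1) τ := by
      simpa using (hasDerivWithinAt_id τ _).smul_const (f' a v)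
    exact (((hf _ (hseg hτ)).comp_hasDerivWithinAt τ hline hseg).sub_const (f a)).sub hlin
  have hbound : ∀ τ ∈ Ico (0 : ℝ) 1, ‖f' (a + τ • v) v - f' a v‖ ≤ K * ‖v‖ ^ 2 * τ := by
    intro τ hτ
    calc ‖f' (a + τ • v) v - f' a v‖ = ‖(f' (a + τ • v) - f' a) v‖ := rfl
      _ ≤ ‖f' (a + τ • v) - f' a‖ * ‖v‖ := (f' (a + τ • v) - f' a).le_opNorm v
      _ ≤ K * ‖a + τ • v - a‖ * ‖v‖ :=
        mul_le_mul_of_nonneg_right (hLip _ (hseg (Ico_subset_Icc_self hτ)) _ ha) (norm_nonneg v)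
      _ = K * ‖v‖ ^ 2 * τ := by
        rw [add_sub_cancel_left, norm_smul, Real.norm_of_nonneg hτ.1]; ring
  have key := image_norm_le_of_norm_deriv_right_le_deriv_boundary
    (fun τ hτ => (hφ τ hτ).continuousWithinAt)
    (fun τ hτ => (hφ τ (Ico_subset_Icc_self hτ)).mono_of_mem_nhdsWithin (Icc_mem_nhdsGE_of_mem hτ))
    (B := fun τ => K / 2 * ‖v‖ ^ 2 * τ ^ 2) (by simp [φ])
    (fun τ => ((hasDerivAt_pow 2 τ).const_mul (K / 2 * ‖v‖ ^ 2)).congr_deriv (by ring)) hbound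
    (right_mem_Icc.2 zero_le_one)
  simpa [φ, v] using key

section Newton

variable {X Y : Type*} [NormedAddCommGroup X] [NormedSpace ℝ X] [NormedAddCommGroup Y]
  [NormedSpace ℝ Y] {F : X → Y} {F' : X → X →L[ℝ] Y} {s : Set X} {K : ℝ}

lemma Convex.norm_image_le_of_fderiv_apply_sub_eq_neg (hs : Convex ℝ s)
    (hF : ∀ x ∈ s, HasFDerivWithinAt F (F' x) s x)
    (hLip : ∀ x ∈ s, ∀ y ∈ s, ‖F' x - F' y‖ ≤ K * ‖x - y‖) {a b : X} (ha : a ∈ s) (hb : b ∈ s)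
    (hab : F' a (b - a) = -F a) : ‖F b‖ ≤ K / 2 * ‖b - a‖ ^ 2 := by
  simpa [hab] using hs.norm_image_sub_sub_fderiv_le hF hLip ha hb

theorem Convex.dist_newton_le_kantorovichSeq (hs : Convex ℝ s)
    (hF : ∀ x ∈ s, HasFDerivWithinAt F (F' x) s x)
    (hLip : ∀ x ∈ s, ∀ y ∈ s, ‖F' x - F' y‖ ≤ K * ‖x - y‖) (hK : 0 ≤ K)
    {u : ℕ → X} (hu : ∀ k, u k ∈ s) (hnewton : ∀ k, F' (u k) (u (k + 1) - u k) = -F (u k))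
    (Γ : X ≃L[ℝ] Y) (hΓ : (Γ : X →L[ℝ] Y) = F' (u 0)) {β α : ℝ}
    (hβ : ‖(Γ.symm : Y →L[ℝ] X)‖ ≤ β) (hα : ‖Γ.symm (F (u 0))‖ ≤ α)
    (hsmall : 2 * (β * K) * α ≤ 1) (k : ℕ) :
    dist (u k) (u (k + 1)) ≤ kantorovichSeq (β * K) α (k + 1) - kantorovichSeq (β * K) α k ∧
      dist (u k) (u 0) ≤ kantorovichSeq (β * K) α k := by
  set t := kantorovichSeq (β * K) α
  have hβ0 : 0 ≤ β := (norm_nonneg _).trans hβ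
  induction k with
  | zero =>
    have h1 : u 1 - u 0 = -Γ.symm (F (u 0)) := by
      rw [← map_neg, ← hnewton 0, ← hΓ]
      simp
    simpa [t, dist_eq_norm', h1] using hα
  | succ k ih =>
    obtain ⟨hstep, hdist⟩ := ih
    have hdist' : dist (u (k + 1)) (u 0) ≤ t (k + 1) :=
      (dist_triangle _ (u k) _).trans (by rw [dist_comm]; linarith)
    refine ⟨?_, hdist'⟩
    have hres : ‖F (u (k + 1))‖ ≤ K / 2 * (t (k + 1) - t k) ^ 2 := by
      refine (hs.norm_image_le_of_fderiv_apply_sub_eq_neg hF hLip (hu k) (hu (k + 1))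
        (hnewton k)).trans ?_
      rw [← dist_eq_norm']
      gcongr
    have hΓdist : ‖F' (u (k + 1)) - Γ‖ ≤ K * t (k + 1) := by
      rw [hΓ]
      exact (hLip _ (hu _) _ (hu 0)).trans (by rw [← dist_eq_norm]; gcongr)
    have hpert := Γ.one_sub_mul_norm_le hβ (F' (u (k + 1))) (u (k + 1 + 1) - u (k + 1))
    rw [hnewton, norm_neg] at hpert
    have hd := one_sub_mul_kantorovichSeq_pos hsmall (k + 1)
    rw [dist_eq_norm']
    refine le_of_mul_le_mul_left ?_ hd
    calc (1 - β * K * t (k + 1)) * ‖u (k + 1 + 1) - u (k + 1)‖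
        ≤ (1 - β * ‖F' (u (k + 1)) - Γ‖) * ‖u (k + 1 + 1) - u (k + 1)‖ := by
          have hβΓ : β * ‖F' (u (k + 1)) - Γ‖ ≤ β * K * t (k + 1) := by
            rw [mul_assoc]
            exact mul_le_mul_of_nonneg_left hΓdist hβ0
          exact mul_le_mul_of_nonneg_right (by linarith) (norm_nonneg _)
      _ ≤ β * ‖F (u (k + 1))‖ := hpert
      _ ≤ β * (K / 2 * (t (k + 1) - t k) ^ 2) := by gcongr
      _ = kantorovichPoly (β * K) α (t (k + 1)) := by
          rw [kantorovichPoly_kantorovichSeq_succ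
            (one_sub_mul_kantorovichSeq_pos hsmall k).ne']
          ring
      _ = (1 - β * K * t (k + 1)) * (t (k + 1 + 1) - t (k + 1)) := by
          rw [← kantorovichSeq_succ_sub_mul hd.ne', mul_comm]

theorem Convex.image_eq_zero_of_tendsto_newton (hs : Convex ℝ s)
    (hF : ∀ x ∈ s, HasFDerivWithinAt F (F' x) s x)
    (hLip : ∀ x ∈ s, ∀ y ∈ s, ‖F' x - F' y‖ ≤ K * ‖x - y‖)
    {u : ℕ → X} (hu : ∀ k, u k ∈ s) (hnewton : ∀ k, F' (u k) (u (k + 1) - u k) = -F (u k))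
    {x : X} (hx : Tendsto u atTop (𝓝 x)) (hFx : ContinuousAt F x) : F x = 0 := by
  have hx' : Tendsto (fun k => u (k + 1)) atTop (𝓝 x) := hx.comp (tendsto_add_atTop_nat 1)
  have hres : Tendsto (fun k => F (u (k + 1))) atTop (𝓝 0) := by
    refine squeeze_zero_norm (fun k => hs.norm_image_le_of_fderiv_apply_sub_eq_neg
      hF hLip (hu k) (hu (k + 1)) (hnewton k)) ?_
    simpa using (hx'.sub hx).norm.pow 2 |>.const_mul (K / 2)
  exact tendsto_nhds_unique (hFx.tendsto.comp hx') hres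

end Newton

theorem newton_kantorovich_sequence_converges_to_zero_general
    {X Y : Type*} [NormedAddCommGroup X] [NormedSpace ℝ X] [CompleteSpace X]
    [NormedAddCommGroup Y] [NormedSpace ℝ Y]
    (F : X → Y) (F' : X → X →L[ℝ] Y)
    (Dstar : Set X)
    (hdiff : ∀ u ∈ Dstar, HasFDerivAt F (F' u) u)
    (K : ℝ) (hK : 0 < K)
    (hLip : ∀ u₁ ∈ Dstar, ∀ u₂ ∈ Dstar, ‖F' u₁ - F' u₂‖ ≤ K * ‖u₁ - u₂‖)
    (ustar : X)
    (Γ : X ≃L[ℝ] Y) (hΓ : (Γ : X →L[ℝ] Y) = F' ustar)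
    (β α rminus : ℝ)
    (hβ : β = ‖(Γ.symm : Y →L[ℝ] X)‖)
    (hα : α = ‖Γ.symm (F ustar)‖)
    (hsmall : β * K * α ≤ 1 / 2)
    (hball : closedBall ustar rminus ⊆ Dstar)
    (useq : ℕ → X) (h0 : useq 0 = ustar)
    (hnewton : ∀ k, ∃ e : X ≃L[ℝ] Y, (e : X →L[ℝ] Y) = F' (useq k) ∧
      useq (k + 1) = useq k - e.symm (F (useq k)))
    (hin : ∀ k, useq k ∈ closedBall ustar rminus) :
    ∃ u : X, Tendsto useq atTop (nhds u) ∧ u ∈ closedBall ustar rminus ∧ F u = 0 := by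
  subst h0
  have hF : ∀ x ∈ closedBall (useq 0) rminus,
      HasFDerivWithinAt F (F' x) (closedBall (useq 0) rminus) x :=
    fun x hx => (hdiff x (hball hx)).hasFDerivWithinAt
  have hLip' := fun x hx y hy => hLip x (hball hx) y (hball hy)
  have hstep : ∀ k, F' (useq k) (useq (k + 1) - useq k) = -F (useq k) := by
    intro k
    obtain ⟨e, he, hk⟩ := hnewton k
    rw [hk, ← he]
    simp
  have hsmall' : 2 * (β * K) * α ≤ 1 := by linarith
  have hc : 0 ≤ β * K := mul_nonneg (hβ ▸ norm_nonneg _) hK.le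
  have hincr := (convex_closedBall _ _).dist_newton_le_kantorovichSeq hF hLip' hK.le hin hstep Γ hΓ
    hβ.ge hα.ge hsmall'
  obtain ⟨u, hu⟩ := cauchySeq_tendsto_of_complete <| cauchySeq_of_dist_le_sub_of_monotone
    (kantorovichSeq_monotone hc (hα ▸ norm_nonneg _) hsmall')
    (kantorovichSeq_le_two_mul hc (hα ▸ norm_nonneg _) hsmall') fun k => (hincr k).1
  have hu_mem : u ∈ closedBall (useq 0) rminus :=
    isClosed_closedBall.mem_of_tendsto hu (Eventually.of_forall hin)
  exact ⟨u, hu, hu_mem, (convex_closedBall _ _).image_eq_zero_of_tendsto_newton hF hLip' hin hstep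
    hu (hdiff u (hball hu_mem)).continuousAt⟩

/-- Newton–Kantorovich: any Newton sequence for `F` starting at `ustar` whose iterates lie in
the closed ball of radius `r⁻` around `ustar` converges to a zero of `F` in that ball. -/
theorem newton_kantorovich_sequence_converges_to_zero
    {X Y : Type*} [NormedAddCommGroup X] [NormedSpace ℝ X] [CompleteSpace X]
    [NormedAddCommGroup Y] [NormedSpace ℝ Y] [CompleteSpace Y]
    (F : X → Y) (F' : X → X →L[ℝ] Y)
    (Dstar : Set X) (hDopen : IsOpen Dstar) (hDconv : Convex ℝ Dstar)
    (hdiff : ∀ u ∈ Dstar, HasFDerivAt F (F' u) u)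
    (K : ℝ) (hK : 0 < K)
    (hLip : ∀ u₁ ∈ Dstar, ∀ u₂ ∈ Dstar, ‖F' u₁ - F' u₂‖ ≤ K * ‖u₁ - u₂‖)
    (ustar : X) (hustar : ustar ∈ Dstar)
    (Γ : X ≃L[ℝ] Y) (hΓ : (Γ : X →L[ℝ] Y) = F' ustar)
    (β α rminus : ℝ)
    (hβ : β = ‖(Γ.symm : Y →L[ℝ] X)‖)
    (hα : α = ‖Γ.symm (F ustar)‖)
    (hsmall : β * K * α ≤ 1 / 2)
    (hrminus : rminus = (1 - Real.sqrt (1 - 2 * β * K * α)) / (β * K))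
    (hball : closedBall ustar rminus ⊆ Dstar)
    (useq : ℕ → X) (h0 : useq 0 = ustar)
    (hnewton : ∀ k, ∃ e : X ≃L[ℝ] Y, (e : X →L[ℝ] Y) = F' (useq k) ∧
      useq (k + 1) = useq k - e.symm (F (useq k)))
    (hin : ∀ k, useq k ∈ closedBall ustar rminus) :
    ∃ u : X, Tendsto useq atTop (nhds u) ∧ u ∈ closedBall ustar rminus ∧ F u = 0 :=
  newton_kantorovich_sequence_converges_to_zero_general F F' Dstar hdiff K hK hLip ustar Γ hΓ β α
    rminus hβ hα hsmall hball useq h0 hnewton hin
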